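/- For every n, there exists a graph with at most n vertices having at least ⌊√n − 1⌋!/2 minimal paths; hence the number of minimal paths in a graph on n vertices can grow super-polynomially (faster than any fixed power of n). -/

import Mathlib

open Classical in
/-- Vertex type of the bipartite graph `G k`: `V1 = Fin k` plus `V2` = unordered
pairs of distinct elements of `V1`. -/
abbrev GVert (k : ℕ) := Fin k ⊕ {p : Sym2 (Fin k) // ¬ p.IsDiag}

/-- The bipartite graph `G k`: `a ∈ V1` is adjacent to `p ∈ V2` iff `a ∈ p`. -/
def biG (k : ℕ) : SimpleGraph (GVert k) where
  Adj x y := ∃ (a : Fin k) (p : {p : Sym2 (Fin k) // ¬ p.IsDiag}),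
    a ∈ p.val ∧ ((x = Sum.inl a ∧ y = Sum.inr p) ∨ (x = Sum.inr p ∧ y = Sum.inl a))
  symm := ⟨by rintro x y ⟨a, p, hm, (⟨rfl, rfl⟩ | ⟨rfl, rfl⟩)⟩ <;> exact ⟨a, p, hm, by tauto⟩⟩
  loopless := ⟨by rintro x ⟨a, p, hm, (⟨rfl, h⟩ | ⟨rfl, h⟩)⟩ <;> simp_all⟩

/-- The `V2`-vertex `{a,b}` (junk value `inl a` if `a = b`). -/
def pairV {k : ℕ} (a b : Fin k) : GVert k :=
  if h : a = b then Sum.inl a else Sum.inr ⟨s(a, b), by simp [h]⟩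

/-- The alternating list of vertices `a₁, {a₁,a₂}, a₂, …` associated to a list in `V1`. -/
def altList {k : ℕ} : List (Fin k) → List (GVert k)
  | [] => []
  | [a] => [Sum.inl a]
  | a :: b :: rest => Sum.inl a :: pairV a b :: altList (b :: rest)

/-- The alternating path associated to a permutation of `Fin k`. -/
def permPath {k : ℕ} (σ : Equiv.Perm (Fin k)) : List (GVert k) :=
  altList ((List.finRange k).map σ)

/-- `L` is a path: consecutive vertices adjacent and no repeats. -/
def IsPathList {V : Type*} (G : SimpleGraph V) (L : List V) : Prop :=
  List.Chain' G.Adj L ∧ L.Nodup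

/-- `L` is a minimal path: no proper subsequence with the same endpoints is a path. -/
def IsMinimalPath {V : Type*} (G : SimpleGraph V) (L : List V) : Prop :=
  IsPathList G L ∧ ∀ L' : List V, L'.Sublist L → L'.head? = L.head? →
    L'.getLast? = L.getLast? → IsPathList G L' → L' = L


/-!
In the incidence graph `biG k` of the points and the two-element subsets of `Fin k`, every
permutation `σ` gives the path `σ 0, {σ 0, σ 1}, σ 1, …, σ (k-1)`. A point is adjacent only to
the pairs containing it, so this path has no chords, and a chordless path admits no shortcut:
the `k!` paths are minimal. The graph has `k + C(k,2) = C(k+1,2)` vertices, at most `n` for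
`k = ⌊√n - 1⌋`. Since `(m+1)^d ≤ (2^d)^m` and factorials eventually beat geometric sequences,
`⌊√n - 1⌋!/2` with `n = (m+1)^2` outgrows every `c n^d`.
-/

open scoped Nat

section Chordless

variable {V : Type*} (G : SimpleGraph V)

def IsChordless : List V → Prop
  | x :: y :: R => (∀ z ∈ R, ¬ G.Adj x z) ∧ IsChordless (y :: R)
  | _ => True

variable {G}

theorem IsChordless.eq_of_sublist : ∀ {L L' : List V}, IsChordless G L → L.Nodup →
    L'.Sublist L → L'.head? = L.head? → L'.getLast? = L.getLast? → L'.IsChain G.Adj → L' = L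
  | [], _, _, _, hs, _, _, _ => List.sublist_nil.mp hs
  | [x], _, _, _, hs, hh, _, _ => by
    rcases List.sublist_singleton.mp hs with rfl | rfl
    · simp at hh
    · rfl
  | x :: y :: R, [], _, _, _, hh, _, _ => by simp at hh
  | x :: y :: R, x' :: T, ⟨hx, hR⟩, hnd, hs, hh, hl, hc => by
    obtain rfl : x = x' := by simpa using hh.symm
    have hxR : x ∉ y :: R := (List.nodup_cons.mp hnd).1
    have hsT : T.Sublist (y :: R) := List.cons_sublist_cons.mp hs
    cases T with
    | nil =>
      rw [List.getLast?_singleton, List.getLast?_cons_cons, eq_comm] at hl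
      exact absurd (List.mem_of_getLast? hl) hxR
    | cons t T =>
      obtain ⟨hxt, hcT⟩ := List.isChain_cons_cons.mp hc
      obtain rfl : t = y := by
        rcases List.mem_cons.mp (hsT.subset List.mem_cons_self) with h | h
        · exact h
        · exact absurd hxt (hx t h)
      rw [List.getLast?_cons_cons, List.getLast?_cons_cons] at hl
      rw [IsChordless.eq_of_sublist hR hnd.of_cons hsT rfl hl hcT]

theorem IsPathList.isMinimalPath {L : List V} (hp : IsPathList G L) (hL : IsChordless G L) :
    IsMinimalPath G L :=
  ⟨hp, fun _ hs hh hl hp' => hL.eq_of_sublist hp.2 hs hh hl hp'.1⟩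

theorem finite_setOf_isPathList [Fintype V] : {L : List V | IsPathList G L}.Finite :=
  (List.finite_length_le V (Fintype.card V)).subset fun _ hL => hL.2.length_le_card

end Chordless

section BipartiteGraph

variable {k : ℕ}

def GVert.toSym2 : GVert k → Sym2 (Fin k) := Sum.elim (fun a => s(a, a)) Subtype.val

@[simp]
theorem GVert.mem_toSym2_inl {a e : Fin k} : e ∈ GVert.toSym2 (Sum.inl a) ↔ e = a := by
  simp [GVert.toSym2]

theorem GVert.toSym2_pairV (a b : Fin k) : GVert.toSym2 (pairV a b) = s(a, b) := by
  unfold pairV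
  split_ifs with h
  · simp [GVert.toSym2, h]
  · rfl

theorem pairV_of_ne {a b : Fin k} (h : a ≠ b) :
    pairV a b = Sum.inr ⟨s(a, b), Sym2.mk_isDiag_iff.not.mpr h⟩ :=
  dif_neg h

@[simp]
theorem biG_adj_inl_inr {a : Fin k} {p : {p : Sym2 (Fin k) // ¬ p.IsDiag}} :
    (biG k).Adj (Sum.inl a) (Sum.inr p) ↔ a ∈ p.val := by
  simpa [biG, Subtype.ext_iff] using fun _ => p.2

@[simp]
theorem biG_adj_inr_inl {a : Fin k} {p : {p : Sym2 (Fin k) // ¬ p.IsDiag}} :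
    (biG k).Adj (Sum.inr p) (Sum.inl a) ↔ a ∈ p.val := by
  rw [(biG k).adj_comm, biG_adj_inl_inr]

@[simp]
theorem biG_not_adj_inl_inl {a b : Fin k} : ¬ (biG k).Adj (Sum.inl a) (Sum.inl b) := by
  simp [biG]

@[simp]
theorem biG_not_adj_inr_inr {p q : {p : Sym2 (Fin k) // ¬ p.IsDiag}} :
    ¬ (biG k).Adj (Sum.inr p) (Sum.inr q) := by
  simp [biG]

theorem biG_adj_inl_pairV {a b : Fin k} (h : a ≠ b) : (biG k).Adj (Sum.inl a) (pairV a b) := by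
  simp [pairV_of_ne h]

theorem biG_adj_pairV_inl {a b : Fin k} (h : a ≠ b) : (biG k).Adj (pairV a b) (Sum.inl b) := by
  simp [pairV_of_ne h]

theorem exists_mem_toSym2_of_biG_adj {x y : GVert k} (h : (biG k).Adj x y) :
    ∃ e, e ∈ x.toSym2 ∧ e ∈ y.toSym2 := by
  rcases x with a | p <;> rcases y with b | q <;> simp at h
  · exact ⟨a, by simp, h⟩
  · exact ⟨b, h, by simp⟩

theorem card_GVert (k : ℕ) : Fintype.card (GVert k) = (k + 1).choose 2 := by
  rw [Fintype.card_sum, Sym2.card_subtype_not_diag, Fintype.card_fin, Nat.choose_succ_succ,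
    Nat.choose_one_right]

end BipartiteGraph

section AlternatingPath

variable {k : ℕ}

theorem altList_cons (a : Fin k) (m : List (Fin k)) :
    altList (a :: m) = Sum.inl a :: (altList (a :: m)).tail := by
  cases m <;> rfl

theorem mem_of_mem_toSym2_of_mem_altList :
    ∀ {m : List (Fin k)} {x : GVert k}, x ∈ altList m → ∀ e ∈ x.toSym2, e ∈ m
  | [], _, hx, _, _ => by simp [altList] at hx
  | [a], _, hx, e, he => by
    obtain rfl : _ = Sum.inl a := List.mem_singleton.mp hx
    simpa using he
  | a :: b :: r, x, hx, e, he => by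
    rcases List.mem_cons.mp hx with rfl | hx
    · simp_all
    rcases List.mem_cons.mp hx with rfl | hx
    · rw [GVert.toSym2_pairV, Sym2.mem_iff] at he
      rcases he with rfl | rfl <;> simp
    · exact List.mem_cons_of_mem a (mem_of_mem_toSym2_of_mem_altList hx e he)

theorem not_mem_altList {m : List (Fin k)} {x : GVert k} {e : Fin k} (he : e ∈ x.toSym2)
    (hm : e ∉ m) : x ∉ altList m :=
  fun hx => hm (mem_of_mem_toSym2_of_mem_altList hx e he)

theorem not_biG_adj_of_mem_altList {m : List (Fin k)} {x z : GVert k}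
    (hx : ∀ e ∈ x.toSym2, e ∉ m) (hz : z ∈ altList m) : ¬ (biG k).Adj x z := fun hxz =>
  have ⟨e, hex, hez⟩ := exists_mem_toSym2_of_biG_adj hxz
  hx e hex (mem_of_mem_toSym2_of_mem_altList hz e hez)

theorem isChain_altList : ∀ {m : List (Fin k)}, m.Nodup → (altList m).IsChain (biG k).Adj
  | [], _ | [_], _ => by simp [altList]
  | a :: b :: r, h => by
    have hab : a ≠ b := List.rel_of_pairwise_cons h List.mem_cons_self
    have hbr := isChain_altList h.of_cons
    show (Sum.inl a :: pairV a b :: altList (b :: r)).IsChain _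
    rw [altList_cons] at hbr ⊢
    exact .cons_cons (biG_adj_inl_pairV hab) (.cons_cons (biG_adj_pairV_inl hab) hbr)

theorem nodup_altList : ∀ {m : List (Fin k)}, m.Nodup → (altList m).Nodup
  | [], _ | [_], _ => by simp [altList]
  | a :: b :: r, h => by
    have ha : a ∉ b :: r := (List.nodup_cons.mp h).1
    have hab : a ≠ b := List.rel_of_pairwise_cons h List.mem_cons_self
    refine List.nodup_cons.mpr ⟨?_, List.nodup_cons.mpr ⟨?_, nodup_altList h.of_cons⟩⟩
    · rw [List.mem_cons, pairV_of_ne hab, not_or]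
      exact ⟨Sum.inl_ne_inr, not_mem_altList (GVert.mem_toSym2_inl.mpr rfl) ha⟩
    · exact not_mem_altList (by simp [GVert.toSym2_pairV]) ha

theorem isChordless_altList : ∀ {m : List (Fin k)}, m.Nodup → IsChordless (biG k) (altList m)
  | [], _ | [_], _ => trivial
  | [a, b], _ => ⟨by simp [altList], by simp [altList, IsChordless]⟩
  | a :: b :: c :: r, h => by
    have ha : a ∉ b :: c :: r := (List.nodup_cons.mp h).1
    have hb : b ∉ c :: r := (List.nodup_cons.mp h.of_cons).1
    have hab : a ≠ b := List.rel_of_pairwise_cons h List.mem_cons_self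
    have hbc : b ≠ c := List.rel_of_pairwise_cons h.of_cons List.mem_cons_self
    refine ⟨fun z hz => not_biG_adj_of_mem_altList ?_ hz, ?_, isChordless_altList h.of_cons⟩
    · exact fun e he => by rwa [GVert.mem_toSym2_inl.mp he]
    rintro z (_ | ⟨_, hz⟩)
    · simp [pairV_of_ne hab, pairV_of_ne hbc]
    · refine not_biG_adj_of_mem_altList ?_ hz
      rw [GVert.toSym2_pairV]
      intro e he
      rcases Sym2.mem_iff.mp he with rfl | rfl
      · exact fun h => ha (List.mem_cons_of_mem _ h)
      · exact hb

theorem isMinimalPath_altList {m : List (Fin k)} (h : m.Nodup) :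
    IsMinimalPath (biG k) (altList m) :=
  IsPathList.isMinimalPath ⟨isChain_altList h, nodup_altList h⟩ (isChordless_altList h)

theorem filterMap_getLeft?_altList : ∀ {m : List (Fin k)}, m.Nodup →
    (altList m).filterMap Sum.getLeft? = m
  | [], _ | [_], _ => rfl
  | a :: b :: r, h => by
    have hab : a ≠ b := List.rel_of_pairwise_cons h List.mem_cons_self
    show (Sum.inl a :: pairV a b :: altList (b :: r)).filterMap _ = _
    rw [pairV_of_ne hab, List.filterMap_cons, List.filterMap_cons,
      filterMap_getLeft?_altList h.of_cons]
    rfl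

theorem permPath_injective : Function.Injective (permPath (k := k)) := by
  intro σ τ h
  have hσ := (List.nodup_finRange k).map σ.injective
  have hτ := (List.nodup_finRange k).map τ.injective
  have := congrArg (List.filterMap Sum.getLeft?) h
  rw [permPath, permPath, filterMap_getLeft?_altList hσ, filterMap_getLeft?_altList hτ] at this
  exact Equiv.ext fun i => List.map_inj_left.mp this i (List.mem_finRange i)

theorem factorial_le_ncard_setOf_isMinimalPath (k : ℕ) :
    k ! ≤ {L | IsMinimalPath (biG k) L}.ncard := calc
  k ! = (Set.range (permPath (k := k))).ncard := by
    rw [← Set.image_univ, Set.ncard_image_of_injective _ permPath_injective, Set.ncard_univ,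
      Nat.card_perm, Nat.card_fin]
  _ ≤ _ := by
    refine Set.ncard_le_ncard ?_ (finite_setOf_isPathList.subset fun _ hL => hL.1)
    rintro _ ⟨σ, rfl⟩
    exact isMinimalPath_altList ((List.nodup_finRange k).map σ.injective)

end AlternatingPath

theorem Real.nat_floor_sqrt_natCast_sub_one (n : ℕ) : ⌊√(n : ℝ) - 1⌋₊ = n.sqrt - 1 := by
  rw [Nat.floor_sub_one, Real.nat_floor_real_sqrt_eq_nat_sqrt]

theorem Nat.choose_two_sqrt_sub_one_add_one_le (n : ℕ) : (n.sqrt - 1 + 1).choose 2 ≤ n :=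
  calc (n.sqrt - 1 + 1).choose 2 = n.sqrt.choose 2 := by
        rcases n.sqrt with _ | _ <;> rfl
    _ ≤ n.sqrt ^ 2 := Nat.choose_le_pow _ _
    _ ≤ n := Nat.sqrt_le' n

theorem exists_mul_pow_lt_factorial (C : ℝ) (d : ℕ) : ∃ m : ℕ, C * ((m : ℝ) + 1) ^ d < m ! := by
  obtain ⟨m, hm⟩ := (FloorSemiring.eventually_mul_pow_lt_factorial_sub |C| ((2 : ℝ) ^ d) 0).exists
  refine ⟨m, ?_⟩
  have hm2 : (m : ℝ) + 1 ≤ 2 ^ m := by exact_mod_cast Nat.lt_two_pow_self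
  calc C * ((m : ℝ) + 1) ^ d ≤ |C| * ((m : ℝ) + 1) ^ d := by gcongr; exact le_abs_self C
    _ ≤ |C| * ((2 : ℝ) ^ d) ^ m := by rw [← pow_mul, mul_comm d m, pow_mul]; gcongr
    _ < m ! := by simpa using hm

theorem stmt8 :
    (∀ n : ℕ, ∃ (V : Type) (_ : Fintype V) (G : SimpleGraph V),
      Fintype.card V ≤ n ∧
      (Nat.floor (Real.sqrt n - 1)).factorial / 2 ≤
        Set.ncard {L : List V | IsMinimalPath G L}) ∧
    (∀ c : ℝ, 0 < c → ∀ d : ℕ, ∃ n : ℕ,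
      ((Nat.floor (Real.sqrt n - 1)).factorial : ℝ) / 2 > c * (n : ℝ) ^ d) := by
  refine ⟨fun n => ?_, fun c _ d => ?_⟩
  · refine ⟨GVert ⌊√(n : ℝ) - 1⌋₊, inferInstance, biG _, ?_, ?_⟩
    · rw [card_GVert, Real.nat_floor_sqrt_natCast_sub_one]
      exact Nat.choose_two_sqrt_sub_one_add_one_le n
    · exact (Nat.div_le_self _ _).trans (factorial_le_ncard_setOf_isMinimalPath _)
  · obtain ⟨m, hm⟩ := exists_mul_pow_lt_factorial (2 * c) (2 * d)
    refine ⟨(m + 1) ^ 2, ?_⟩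
    rw [Real.nat_floor_sqrt_natCast_sub_one, Nat.sqrt_eq', Nat.add_sub_cancel, gt_iff_lt,
      lt_div_iff₀ two_pos]
    push_cast
    rw [← pow_mul]
    linarith
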